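/- (Fatou's Lemma for upper integrals.) Let {f_n} be a sequence of functions [a,b] → X converging pointwise almost everywhere to f : [a,b] → X. Then for 1 ≤ p < ∞, ‖f‖_{U^p_ρ([a,b];X)} ≤ liminf_{n→∞} ‖f_n‖_{U^p_ρ([a,b];X)}. -/

import Mathlib

open scoped ENNReal
open Filter MeasureTheory

noncomputable section

/-- A tagged partial partition of `[a,b]`: a finite list of triples `(u, v, t)` where
`[u,v] ⊆ [a,b]` is a nondegenerate closed subinterval with tag `t ∈ [u,v]`, and the
subintervals are pairwise non-overlapping. -/
def IsPP (a b : ℝ) (D : List (ℝ × ℝ × ℝ)) : Prop :=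
  (∀ p ∈ D, a ≤ p.1 ∧ p.1 < p.2.1 ∧ p.2.1 ≤ b ∧ p.1 ≤ p.2.2 ∧ p.2.2 ≤ p.2.1) ∧
  D.Pairwise (fun p q => p.2.1 ≤ q.1 ∨ q.2.1 ≤ p.1)

/-- `D` is `δ`-fine: each `[u,v] ⊆ (t - δ t, t + δ t)`. -/
def IsFine (δ : ℝ → ℝ) (D : List (ℝ × ℝ × ℝ)) : Prop :=
  ∀ p ∈ D, p.2.2 - δ p.2.2 < p.1 ∧ p.2.1 < p.2.2 + δ p.2.2

/-- A (full) tagged partition of `[a,b]`: a tagged partial partition whose intervals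
tile `[a,b]` (total length `b - a`). -/
def IsTP (a b : ℝ) (D : List (ℝ × ℝ × ℝ)) : Prop :=
  IsPP a b D ∧ (D.map (fun p => p.2.1 - p.1)).sum = b - a

/-- The sum `Σ_{([u,v],t) ∈ D} 1_E(t) · w(u,v,t)`. -/
def ppSum (E : Set ℝ) (w : ℝ → ℝ → ℝ → ℝ) (D : List (ℝ × ℝ × ℝ)) : ℝ :=
  (D.map (fun p => E.indicator (fun _ => w p.1 p.2.1 p.2.2) p.2.2)).sum

/-- The variational measure `μ(w, E)` : inf over gauges `δ` of the sup over `δ`-fine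
tagged partial partitions `D` of `Σ 1_E(t) w(u,v,t)`. -/
def varM (a b : ℝ) (w : ℝ → ℝ → ℝ → ℝ) (E : Set ℝ) : ℝ≥0∞ :=
  ⨅ δ : {δ : ℝ → ℝ // ∀ x, 0 < δ x},
    ⨆ D : {D : List (ℝ × ℝ × ℝ) // IsPP a b D ∧ IsFine δ.1 D},
      ENNReal.ofReal (ppSum E w D.1)

/-- Variant of the variational measure over full tagged partitions of `[a,b]`. -/
def varMFull (a b : ℝ) (w : ℝ → ℝ → ℝ → ℝ) : ℝ≥0∞ :=
  ⨅ δ : {δ : ℝ → ℝ // ∀ x, 0 < δ x},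
    ⨆ D : {D : List (ℝ × ℝ × ℝ) // IsTP a b D ∧ IsFine δ.1 D},
      ENNReal.ofReal ((D.1.map (fun p => w p.1 p.2.1 p.2.2)).sum)

variable {X : Type*}

/-- `μ_ρ(h, E)` for an `X`-valued interval-point function `h(u,v,t)`. -/
def varMh [AddCommGroup X] [Module ℝ X] (a b : ℝ) (ρ : Seminorm ℝ X)
    (h : ℝ → ℝ → ℝ → X) (E : Set ℝ) : ℝ≥0∞ :=
  varM a b (fun u v t => ρ (h u v t)) E

/-- `μ_ρ(Θ f, E)` where `Θf([u,v],t) = f(t)(v-u)`. -/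
def varTheta [AddCommGroup X] [Module ℝ X] (a b : ℝ) (ρ : Seminorm ℝ X)
    (f : ℝ → X) (E : Set ℝ) : ℝ≥0∞ :=
  varM a b (fun u v t => ρ (f t) * (v - u)) E

/-- `μ_ρ(Θ^p f, E)` where `Θ^p f([u,v],t) = ρ(f t)^p (v-u)`. -/
def varThetaP [AddCommGroup X] [Module ℝ X] (a b : ℝ) (ρ : Seminorm ℝ X)
    (p : ℝ) (f : ℝ → X) (E : Set ℝ) : ℝ≥0∞ :=
  varM a b (fun u v t => ρ (f t) ^ p * (v - u)) E

/-- The upper-integral seminorm `‖f‖_{U^p_ρ(A;X)} = μ_ρ(Θ^p f, A)^{1/p}`. -/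
def UNorm [AddCommGroup X] [Module ℝ X] (a b : ℝ) (ρ : Seminorm ℝ X)
    (p : ℝ) (f : ℝ → X) (A : Set ℝ) : ℝ≥0∞ :=
  varThetaP a b ρ p f A ^ (1 / p)

/-- Riemann-type sum `Σ_{([u,v],t) ∈ D} f(t)(v-u)`. -/
def rsum [AddCommGroup X] [Module ℝ X] (f : ℝ → X) (D : List (ℝ × ℝ × ℝ)) : X :=
  (D.map (fun p => (p.2.1 - p.1) • f p.2.2)).sum

/-- `z` is a `ρ`-Kurzweil–Henstock integral of `f` on `[a,b]`. -/
def IsKHIntegral [AddCommGroup X] [Module ℝ X] (a b : ℝ) (ρ : Seminorm ℝ X)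
    (f : ℝ → X) (z : X) : Prop :=
  ∀ ε : ℝ, 0 < ε → ∃ δ : ℝ → ℝ, (∀ x, 0 < δ x) ∧
    ∀ D : List (ℝ × ℝ × ℝ), IsTP a b D → IsFine δ D → ρ (rsum f D - z) < ε

section FatouAux

open Set

lemma ofReal_list_sum_le (l : List ℝ) :
    ENNReal.ofReal l.sum ≤ (l.map ENNReal.ofReal).sum := by
  induction l with
  | nil => simp
  | cons x t ih =>
    simp only [List.sum_cons, List.map_cons]
    exact ENNReal.ofReal_add_le.trans (by gcongr)

lemma ofReal_list_sum_eq (l : List ℝ) (h : ∀ x ∈ l, 0 ≤ x) :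
    ENNReal.ofReal l.sum = (l.map ENNReal.ofReal).sum := by
  induction l with
  | nil => simp
  | cons x t ih =>
    simp only [List.sum_cons, List.map_cons]
    rw [ENNReal.ofReal_add (h x (by simp)) (List.sum_nonneg (fun y hy => h y (by simp [hy]))),
      ih (fun y hy => h y (by simp [hy]))]

lemma list_sum_Ioc_le (ν : MeasureTheory.Measure ℝ) :
    ∀ (D : List (ℝ × ℝ × ℝ)), D.Pairwise (fun p q => p.2.1 ≤ q.1 ∨ q.2.1 ≤ p.1) →
    ∀ (S : Set ℝ), (∀ p ∈ D, Set.Ioc p.1 p.2.1 ⊆ S) →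
    (D.map (fun p => ν (Set.Ioc p.1 p.2.1))).sum ≤ ν S := by
  intro D
  induction D with
  | nil => intro _ S _; simp
  | cons p T ih =>
    intro hpw S hsub
    simp only [List.map_cons, List.sum_cons]
    have hd : ∀ q ∈ T, Set.Ioc q.1 q.2.1 ⊆ S \ Set.Ioc p.1 p.2.1 := by
      intro q hq
      have hrel := (List.pairwise_cons.1 hpw).1 q hq
      have hdisj : Disjoint (Set.Ioc q.1 q.2.1) (Set.Ioc p.1 p.2.1) := by
        rw [Set.Ioc_disjoint_Ioc]
        rcases hrel with h | h
        · exact (min_le_right _ _).trans (h.trans (le_max_left _ _))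
        · exact (min_le_left _ _).trans (h.trans (le_max_right _ _))
      intro x hx
      exact ⟨hsub q (by simp [hq]) hx, fun hx' => (Set.disjoint_left.1 hdisj hx) hx'⟩
    have h1 : (T.map (fun q => ν (Set.Ioc q.1 q.2.1))).sum ≤ ν (S \ Set.Ioc p.1 p.2.1) :=
      ih (List.pairwise_cons.1 hpw).2 _ hd
    have h2 : ν (Set.Ioc p.1 p.2.1) ≤ ν (S ∩ Set.Ioc p.1 p.2.1) :=
      MeasureTheory.measure_mono (Set.subset_inter (hsub p (by simp)) le_rfl)
    calc ν (Set.Ioc p.1 p.2.1) + (T.map (fun q => ν (Set.Ioc q.1 q.2.1))).sum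
        ≤ ν (S ∩ Set.Ioc p.1 p.2.1) + ν (S \ Set.Ioc p.1 p.2.1) := add_le_add h2 h1
      _ = ν S := MeasureTheory.measure_inter_add_diff S measurableSet_Ioc

end FatouAux
section FatouAux2

open Set MeasureTheory

lemma varM_le_of_gauge_bound (a b : ℝ) (E : Set ℝ) (w : ℝ → ℝ → ℝ → ℝ)
    (ν : Measure ℝ) (δ : ℝ → ℝ) (hδ : ∀ x, 0 < δ x)
    (h : ∀ p : ℝ × ℝ × ℝ, a ≤ p.1 → p.1 < p.2.1 → p.2.1 ≤ b → p.1 ≤ p.2.2 → p.2.2 ≤ p.2.1 →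
      p.2.2 - δ p.2.2 < p.1 → p.2.1 < p.2.2 + δ p.2.2 →
      ENNReal.ofReal (E.indicator (fun _ => w p.1 p.2.1 p.2.2) p.2.2) ≤ ν (Set.Ioc p.1 p.2.1)) :
    varM a b w E ≤ ν (Set.Ioc a b) := by
  refine (iInf_le _ (⟨δ, hδ⟩ : {δ : ℝ → ℝ // ∀ x, 0 < δ x})).trans (iSup_le ?_)
  rintro ⟨D, hPP, hFine⟩
  refine (ofReal_list_sum_le _).trans ?_
  rw [List.map_map]
  refine le_trans (List.sum_le_sum (l := D)
    (f := fun p => ENNReal.ofReal (E.indicator (fun _ => w p.1 p.2.1 p.2.2) p.2.2))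
    (g := fun p => ν (Set.Ioc p.1 p.2.1)) ?_) ?_
  · intro p hp
    obtain ⟨h1, h2, h3, h4, h5⟩ := hPP.1 p hp
    obtain ⟨h6, h7⟩ := hFine p hp
    exact h p h1 h2 h3 h4 h5 h6 h7
  · refine list_sum_Ioc_le ν D hPP.2 _ ?_
    intro p hp
    obtain ⟨h1, h2, h3, _, _⟩ := hPP.1 p hp
    exact Set.Ioc_subset_Ioc h1 h3

lemma IsFine.mono {δ δ' : ℝ → ℝ} (hle : ∀ x, δ x ≤ δ' x) {D : List (ℝ × ℝ × ℝ)}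
    (h : IsFine δ D) : IsFine δ' D := by
  intro p hp
  obtain ⟨h1, h2⟩ := h p hp
  constructor
  · linarith [hle p.2.2]
  · linarith [hle p.2.2]

lemma ppSum_nonneg (E : Set ℝ) (w : ℝ → ℝ → ℝ → ℝ) (D : List (ℝ × ℝ × ℝ))
    (hw : ∀ p ∈ D, 0 ≤ w p.1 p.2.1 p.2.2) : 0 ≤ ppSum E w D := by
  apply List.sum_nonneg
  intro x hx
  simp only [List.mem_map] at hx
  obtain ⟨p, hp, rfl⟩ := hx
  exact Set.indicator_nonneg (fun _ _ => hw p hp) _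

lemma varM_mono_set (a b : ℝ) (w : ℝ → ℝ → ℝ → ℝ) (hw : ∀ u v t, u < v → 0 ≤ w u v t)
    {E E' : Set ℝ} (hE : E' ⊆ E) : varM a b w E' ≤ varM a b w E := by
  refine iInf_mono fun δ => iSup_mono fun D => ?_
  apply ENNReal.ofReal_le_ofReal
  apply List.sum_le_sum
  intro p hp
  exact Set.indicator_le_indicator_of_subset hE
    (fun _ => hw _ _ _ (D.2.1.1 p hp).2.1) _

lemma varM_union_le (a b : ℝ) (w : ℝ → ℝ → ℝ → ℝ) (hw : ∀ u v t, u < v → 0 ≤ w u v t)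
    (E1 E2 : Set ℝ) : varM a b w (E1 ∪ E2) ≤ varM a b w E1 + varM a b w E2 := by
  refine ENNReal.le_of_forall_pos_le_add fun ε hε hfin => ?_
  have h1 : varM a b w E1 < varM a b w E1 + ε / 2 := by
    refine ENNReal.lt_add_right ?_ (by simp [ENNReal.div_eq_top, hε.ne'])
    exact ne_top_of_le_ne_top hfin.ne le_self_add
  have h2 : varM a b w E2 < varM a b w E2 + ε / 2 := by
    refine ENNReal.lt_add_right ?_ (by simp [ENNReal.div_eq_top, hε.ne'])
    exact ne_top_of_le_ne_top hfin.ne le_add_self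
  rw [varM, iInf_lt_iff] at h1 h2
  obtain ⟨⟨δ1, hδ1⟩, hS1⟩ := h1
  obtain ⟨⟨δ2, hδ2⟩, hS2⟩ := h2
  set δ : ℝ → ℝ := fun x => min (δ1 x) (δ2 x) with hδdef
  have hδ : ∀ x, 0 < δ x := fun x => lt_min (hδ1 x) (hδ2 x)
  have key : varM a b w (E1 ∪ E2) ≤
      (⨆ D : {D : List (ℝ × ℝ × ℝ) // IsPP a b D ∧ IsFine δ1 D},
        ENNReal.ofReal (ppSum E1 w D.1)) +
      (⨆ D : {D : List (ℝ × ℝ × ℝ) // IsPP a b D ∧ IsFine δ2 D},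
        ENNReal.ofReal (ppSum E2 w D.1)) := by
    refine (iInf_le _ (⟨δ, hδ⟩ : {δ : ℝ → ℝ // ∀ x, 0 < δ x})).trans (iSup_le ?_)
    rintro ⟨D, hPP, hFine⟩
    have hsum : ppSum (E1 ∪ E2) w D ≤ ppSum E1 w D + ppSum E2 w D := by
      rw [ppSum, ppSum, ppSum, ← List.sum_map_add]
      apply List.sum_le_sum
      intro p hp
      have hwp := hw p.1 p.2.1 p.2.2 (hPP.1 p hp).2.1
      by_cases h1 : p.2.2 ∈ E1
      · by_cases h2 : p.2.2 ∈ E2 <;>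
          simp [Set.indicator_of_mem, h1, h2, Set.indicator_of_mem (Set.mem_union_left _ h1),
            hwp]
      · by_cases h2 : p.2.2 ∈ E2
        · simp [Set.indicator_of_mem, h1, h2, Set.indicator_of_mem (Set.mem_union_right _ h2),
            hwp]
        · have : p.2.2 ∉ E1 ∪ E2 := by simp [h1, h2]
          simp [Set.indicator_of_notMem, h1, h2, this]
    refine le_trans ((ENNReal.ofReal_le_ofReal hsum).trans ENNReal.ofReal_add_le) ?_
    refine add_le_add ?_ ?_
    · exact le_iSup_of_le ⟨D, hPP, hFine.mono (fun x => min_le_left _ _)⟩ le_rfl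
    · exact le_iSup_of_le ⟨D, hPP, hFine.mono (fun x => min_le_right _ _)⟩ le_rfl
  calc varM a b w (E1 ∪ E2) ≤ _ := key
    _ ≤ (varM a b w E1 + ε / 2) + (varM a b w E2 + ε / 2) := add_le_add hS1.le hS2.le
    _ = varM a b w E1 + varM a b w E2 + (ε / 2 + ε / 2) := by ring
    _ = varM a b w E1 + varM a b w E2 + ε := by rw [ENNReal.add_halves]

end FatouAux2
section FatouAux3

open Set MeasureTheory

lemma varM_null (a b : ℝ) (c : ℝ → ℝ) (hc : ∀ t, 0 ≤ c t) {Z : Set ℝ}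
    (hZ : volume Z = 0) : varM a b (fun u v t => c t * (v - u)) Z = 0 := by
  classical
  refine le_antisymm ?_ zero_le
  refine ENNReal.le_of_forall_pos_le_add fun ε hε _ => ?_
  rw [zero_add]
  set εm : ℕ → ℝ≥0∞ := fun m => (ε : ℝ≥0∞) / 2 / 2 ^ m / (m + 1) with hεmdef
  have hεmpos : ∀ m : ℕ, 0 < εm m := by
    intro m
    apply ENNReal.div_pos
    · apply ne_of_gt
      apply ENNReal.div_pos
      · apply ne_of_gt
        apply ENNReal.div_pos (by exact_mod_cast hε.ne') (by simp)
      · exact ENNReal.pow_ne_top (by simp)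
    · simp [ENNReal.add_eq_top]
  have hexU : ∀ m : ℕ, ∃ U, Z ⊆ U ∧ IsOpen U ∧ volume U < εm m := by
    intro m
    obtain ⟨U, hU1, hU2, hU3⟩ := Set.exists_isOpen_lt_of_lt Z _ (hZ ▸ hεmpos m)
    exact ⟨U, hU1, hU2, hU3⟩
  choose U hUZ hUopen hUlt using hexU
  set ν : Measure ℝ := Measure.sum (fun m : ℕ => ((m : ℝ≥0∞) + 1) • volume.restrict (U m)) with hνdef
  have hrad : ∀ t ∈ Z, ∃ rr > 0, Metric.ball t rr ⊆ U (⌈c t⌉₊) := by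
    intro t ht
    obtain ⟨rr, h1, h2⟩ := Metric.isOpen_iff.1 (hUopen _) t (hUZ _ ht)
    exact ⟨rr, h1, h2⟩
  choose! rr hrrpos hrrball using hrad
  set δ : ℝ → ℝ := fun t => if t ∈ Z then rr t else 1 with hδdef
  have hδpos : ∀ x, 0 < δ x := by
    intro x
    by_cases hx : x ∈ Z
    · simpa [hδdef, hx] using hrrpos x hx
    · simp [hδdef, hx]
  have main : varM a b (fun u v t => c t * (v - u)) Z ≤ ν (Set.Ioc a b) := by
    apply varM_le_of_gauge_bound a b Z _ ν δ hδpos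
    rintro ⟨u, v, t⟩ ha hlt hb h4 h5 h6 h7
    dsimp only at ha hlt hb h4 h5 h6 h7 ⊢
    by_cases htZ : t ∈ Z
    swap
    · simp [Set.indicator_of_notMem htZ]
    rw [Set.indicator_of_mem htZ]
    have hδt : δ t = rr t := if_pos htZ
    rw [hδt] at h6 h7
    have hsub : Set.Ioc u v ⊆ U (⌈c t⌉₊) := by
      intro x hx
      apply hrrball t htZ
      rw [Metric.mem_ball, Real.dist_eq, abs_lt]
      obtain ⟨hx1, hx2⟩ := hx
      constructor <;> linarith
    have hν : ((⌈c t⌉₊ : ℝ≥0∞) + 1) * ENNReal.ofReal (v - u) ≤ ν (Set.Ioc u v) := by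
      rw [hνdef, Measure.sum_apply _ measurableSet_Ioc]
      refine le_trans ?_ (ENNReal.le_tsum (⌈c t⌉₊))
      rw [Measure.smul_apply, Measure.restrict_apply measurableSet_Ioc,
        Set.inter_eq_self_of_subset_left hsub, Real.volume_Ioc, smul_eq_mul]
    refine le_trans ?_ hν
    rw [ENNReal.ofReal_mul (hc t)]
    apply mul_le_mul_left
    calc ENNReal.ofReal (c t) ≤ ENNReal.ofReal ((⌈c t⌉₊ : ℝ) + 1) :=
          ENNReal.ofReal_le_ofReal (by linarith [Nat.le_ceil (c t)])
      _ = (⌈c t⌉₊ : ℝ≥0∞) + 1 := by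
          rw [ENNReal.ofReal_add (by positivity) zero_le_one]
          simp [ENNReal.ofReal_natCast]
  refine main.trans ?_
  have hν2 : ν (Set.Ioc a b) ≤ ν Set.univ := measure_mono (Set.subset_univ _)
  refine hν2.trans ?_
  have : ν Set.univ = ∑' m : ℕ, ((m : ℝ≥0∞) + 1) * volume (U m) := by
    rw [hνdef, Measure.sum_apply _ MeasurableSet.univ]
    congr 1
    funext m
    rw [Measure.smul_apply, Measure.restrict_apply MeasurableSet.univ, Set.univ_inter,
      smul_eq_mul]
  rw [this]
  have hterm : ∀ m : ℕ, ((m : ℝ≥0∞) + 1) * volume (U m) ≤ (ε : ℝ≥0∞) / 2 * (2 : ℝ≥0∞)⁻¹ ^ m := by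
    intro m
    calc ((m : ℝ≥0∞) + 1) * volume (U m) ≤ ((m : ℝ≥0∞) + 1) * εm m :=
          mul_le_mul_right (hUlt m).le _
      _ = εm m * ((m : ℝ≥0∞) + 1) := mul_comm _ _
      _ = (ε : ℝ≥0∞) / 2 / 2 ^ m := by
          rw [hεmdef]
          exact ENNReal.div_mul_cancel (by simp [ENNReal.add_eq_top]) (by simp [ENNReal.add_eq_top])
      _ = (ε : ℝ≥0∞) / 2 * (2 : ℝ≥0∞)⁻¹ ^ m := by
          rw [div_eq_mul_inv, ENNReal.inv_pow]
  calc (∑' m : ℕ, ((m : ℝ≥0∞) + 1) * volume (U m)) ≤ ∑' m : ℕ, (ε : ℝ≥0∞) / 2 * (2 : ℝ≥0∞)⁻¹ ^ m :=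
        ENNReal.tsum_le_tsum hterm
    _ = (ε : ℝ≥0∞) / 2 * (1 - 2⁻¹)⁻¹ := by rw [ENNReal.tsum_mul_left, ENNReal.tsum_geometric]
    _ = (ε : ℝ≥0∞) / 2 * 2 := by rw [ENNReal.one_sub_inv_two, inv_inv]
    _ = (ε : ℝ≥0∞) := ENNReal.div_mul_cancel (by simp) (by simp)

end FatouAux3
section FatouAux4

open Set MeasureTheory Filter

lemma varM_le_lintegral (a b : ℝ) (c : ℝ → ℝ) (hc : ∀ t, 0 ≤ c t) (E : Set ℝ)
    (G : ℝ → ℝ≥0∞) (hG : Measurable G)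
    (hcG : ∀ t ∈ E ∩ Set.Icc a b, ENNReal.ofReal (c t) ≤ G t) :
    varM a b (fun u v t => c t * (v - u)) E ≤ ∫⁻ x in Set.Icc a b, G x := by
  classical
  by_cases htop : (∫⁻ x in Set.Icc a b, G x) = ∞
  · rw [htop]; exact le_top
  set f : ℝ → ℝ≥0∞ := (Set.Icc a b).indicator G with hfdef
  have hfmeas : Measurable f := hG.indicator measurableSet_Icc
  have hfint : (∫⁻ y, f y) ≠ ∞ := by
    rwa [hfdef, lintegral_indicator measurableSet_Icc]
  set vf := IsUnifLocDoublingMeasure.vitaliFamily (volume : Measure ℝ) 1 with hvdef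
  have hae := vf.ae_tendsto_lintegral_div' hfmeas hfint
  set Z : Set ℝ := {x | ¬ Tendsto (fun s => (∫⁻ y in s, f y) / volume s)
      (vf.filterAt x) (nhds (f x))} with hZdef
  have hZ : volume Z = 0 := hae
  have hwpos : ∀ (u' v' t' : ℝ), u' < v' → 0 ≤ c t' * (v' - u') :=
    fun u' v' t' h => mul_nonneg (hc _) (by linarith)
  have hsplit : varM a b (fun u v t => c t * (v - u)) E ≤
      varM a b (fun u v t => c t * (v - u)) (E \ Z) +
      varM a b (fun u v t => c t * (v - u)) (E ∩ Z) := by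
    have hEeq : E = (E \ Z) ∪ (E ∩ Z) := by rw [Set.diff_union_inter]
    conv_lhs => rw [hEeq]
    exact varM_union_le a b _ hwpos _ _
  have hz0 : varM a b (fun u v t => c t * (v - u)) (E ∩ Z) = 0 := by
    refine le_antisymm ?_ zero_le
    refine le_trans (varM_mono_set a b _ hwpos Set.inter_subset_right) ?_
    exact (varM_null a b c hc hZ).le
  refine hsplit.trans ?_
  rw [hz0, add_zero]
  -- main estimate for the good set
  refine ENNReal.le_of_forall_pos_le_add fun κ hκ hIfin => ?_
  set M : ℝ := max (b - a) 0 + 1 with hMdef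
  have hM : 0 < M := by positivity
  set ε : ℝ := (κ : ℝ) / M with hεdef
  have hε : 0 < ε := div_pos (by exact_mod_cast hκ) hM
  -- the comparison measure
  set ν : Measure ℝ := (ENNReal.ofReal ε) • volume + volume.withDensity f with hνdef
  -- gauge from differentiation
  have hkey : ∀ t ∈ (E \ Z) ∩ Set.Icc a b, ∃ η > (0:ℝ),
      ∀ s ∈ vf.setsAt t, s ⊆ Metric.closedBall t η →
        ENNReal.ofReal (c t) ≤ ENNReal.ofReal ε + (∫⁻ y in s, f y) / volume s := by
    rintro t ⟨⟨htE, htZ⟩, htIcc⟩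
    have htt : Tendsto (fun s => (∫⁻ y in s, f y) / volume s) (vf.filterAt t) (nhds (f t)) := by
      by_contra hcon
      exact htZ hcon
    have hft : ENNReal.ofReal (c t) ≤ f t := by
      rw [hfdef, Set.indicator_of_mem htIcc]
      exact hcG t ⟨htE, htIcc⟩
    have hev : ∀ᶠ s in vf.filterAt t,
        ENNReal.ofReal (c t) ≤ ENNReal.ofReal ε + (∫⁻ y in s, f y) / volume s := by
      rcases eq_or_ne (ENNReal.ofReal (c t)) 0 with h0 | h0
      · filter_upwards with s; rw [h0]; exact zero_le
      rcases eq_or_ne (f t) ∞ with hft' | hft'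
      · have : Set.Ioi (ENNReal.ofReal (c t)) ∈ nhds (f t) := by
          rw [hft']
          exact Ioi_mem_nhds (by simpa using ENNReal.ofReal_lt_top)
        filter_upwards [htt.eventually_mem this] with s hs
        exact le_add_left (le_of_lt hs)
      · have hlt : f t - ENNReal.ofReal ε < f t := by
          refine ENNReal.sub_lt_self hft' ?_ ?_
          · exact fun h => h0 (le_antisymm (h ▸ hft) zero_le)
          · simpa using hε
        have : Set.Ioi (f t - ENNReal.ofReal ε) ∈ nhds (f t) := Ioi_mem_nhds hlt
        filter_upwards [htt.eventually_mem this] with s hs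
        have h1 : f t ≤ (∫⁻ y in s, f y) / volume s + ENNReal.ofReal ε :=
          tsub_le_iff_right.1 (le_of_lt hs)
        calc ENNReal.ofReal (c t) ≤ f t := hft
          _ ≤ (∫⁻ y in s, f y) / volume s + ENNReal.ofReal ε := h1
          _ = ENNReal.ofReal ε + (∫⁻ y in s, f y) / volume s := add_comm _ _
    rw [VitaliFamily.eventually_filterAt_iff] at hev
    exact hev
  choose! η hηpos hηprop using hkey
  set δ : ℝ → ℝ := fun t => if t ∈ (E \ Z) ∩ Set.Icc a b then η t else 1 with hδdef
  have hδpos : ∀ x, 0 < δ x := by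
    intro x
    show 0 < if x ∈ (E \ Z) ∩ Set.Icc a b then η x else 1
    split
    · exact hηpos x ‹_›
    · exact one_pos
  have main : varM a b (fun u v t => c t * (v - u)) (E \ Z) ≤ ν (Set.Ioc a b) := by
    apply varM_le_of_gauge_bound a b _ _ ν δ hδpos
    rintro ⟨u, w, t⟩ ha hlt hb h4 h5 h6 h7
    dsimp only at ha hlt hb h4 h5 h6 h7 ⊢
    by_cases htE : t ∈ E \ Z
    swap
    · simp [Set.indicator_of_notMem htE]
    have htIcc : t ∈ Set.Icc a b := ⟨le_trans ha h4, le_trans h5 hb⟩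
    have htmem : t ∈ (E \ Z) ∩ Set.Icc a b := ⟨htE, htIcc⟩
    rw [Set.indicator_of_mem htE]
    have hδt : δ t = η t := if_pos htmem
    rw [hδt] at h6 h7
    -- the interval [u,w] is in the Vitali family at t
    have hsets : Set.Icc u w ∈ vf.setsAt t := by
      have heq : Set.Icc u w = Metric.closedBall ((u + w) / 2) ((w - u) / 2) := by
        rw [Real.closedBall_eq_Icc]
        congr 1 <;> ring
      rw [heq]
      apply IsUnifLocDoublingMeasure.closedBall_mem_vitaliFamily_of_dist_le_mul
      · rw [Real.dist_eq, one_mul, abs_le]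
        constructor <;> [linarith; linarith]
      · linarith
    have hball : Set.Icc u w ⊆ Metric.closedBall t (η t) := by
      rw [Real.closedBall_eq_Icc]
      exact Set.Icc_subset_Icc (by linarith) (by linarith)
    have hq := hηprop t htmem (Set.Icc u w) hsets hball
    have hvol : volume (Set.Icc u w) = ENNReal.ofReal (w - u) := Real.volume_Icc
    have hIoc : (∫⁻ y in Set.Icc u w, f y) = ∫⁻ y in Set.Ioc u w, f y :=
      setLIntegral_congr (Ioc_ae_eq_Icc (μ := volume) (a := u) (b := w)).symm
    have hstep : ENNReal.ofReal (c t * (w - u)) ≤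
        ENNReal.ofReal ε * ENNReal.ofReal (w - u) + ∫⁻ y in Set.Icc u w, f y := by
      rw [ENNReal.ofReal_mul (hc t)]
      calc ENNReal.ofReal (c t) * ENNReal.ofReal (w - u)
          ≤ (ENNReal.ofReal ε + (∫⁻ y in Set.Icc u w, f y) / volume (Set.Icc u w)) *
            ENNReal.ofReal (w - u) := mul_le_mul_left hq _
        _ = ENNReal.ofReal ε * ENNReal.ofReal (w - u) +
            ((∫⁻ y in Set.Icc u w, f y) / volume (Set.Icc u w)) * volume (Set.Icc u w) := by
            rw [add_mul, hvol]
        _ ≤ ENNReal.ofReal ε * ENNReal.ofReal (w - u) + ∫⁻ y in Set.Icc u w, f y := by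
            gcongr
            exact ENNReal.mul_le_of_le_div le_rfl
    refine hstep.trans ?_
    rw [hνdef]
    simp only [Measure.add_apply, Measure.smul_apply, smul_eq_mul]
    rw [withDensity_apply f measurableSet_Ioc, Real.volume_Ioc, hIoc]
  refine main.trans ?_
  have hν : ν (Set.Ioc a b) = ENNReal.ofReal ε * ENNReal.ofReal (b - a) +
      ∫⁻ y in Set.Ioc a b, f y := by
    rw [hνdef]
    simp only [Measure.add_apply, Measure.smul_apply, smul_eq_mul]
    rw [withDensity_apply f measurableSet_Ioc, Real.volume_Ioc]
  rw [hν]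
  have h1 : ENNReal.ofReal ε * ENNReal.ofReal (b - a) ≤ (κ : ℝ≥0∞) := by
    rw [← ENNReal.ofReal_mul hε.le]
    calc ENNReal.ofReal (ε * (b - a)) ≤ ENNReal.ofReal (ε * M) := by
          apply ENNReal.ofReal_le_ofReal
          apply mul_le_mul_of_nonneg_left ?_ hε.le
          rw [hMdef]
          have := le_max_left (b - a) 0
          linarith
      _ = ENNReal.ofReal (κ : ℝ) := by rw [hεdef, div_mul_cancel₀ _ hM.ne']
      _ = (κ : ℝ≥0∞) := ENNReal.ofReal_coe_nnreal
  have h2 : (∫⁻ y in Set.Ioc a b, f y) ≤ ∫⁻ x in Set.Icc a b, G x := by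
    calc (∫⁻ y in Set.Ioc a b, f y) ≤ ∫⁻ y, f y := setLIntegral_le_lintegral _ _
      _ = ∫⁻ x in Set.Icc a b, G x := by rw [hfdef, lintegral_indicator measurableSet_Icc]
  calc ENNReal.ofReal ε * ENNReal.ofReal (b - a) + ∫⁻ y in Set.Ioc a b, f y
      ≤ (κ : ℝ≥0∞) + ∫⁻ x in Set.Icc a b, G x := add_le_add h1 h2
    _ = (∫⁻ x in Set.Icc a b, G x) + κ := add_comm _ _

end FatouAux4
section FatouAux5

open Set MeasureTheory Filter

lemma vitali_step (a b : ℝ) (A : Set ℝ) (hA : A ⊆ Set.Ioo a b) (F : Set ℝ) (hF : IsClosed F)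
    (δ : ℝ → ℝ) (hδ : ∀ x, 0 < δ x) (ε : ℝ≥0∞) (hε : 0 < ε) :
    ∃ D : List (ℝ × ℝ × ℝ), IsPP a b D ∧ IsFine δ D ∧
      (∀ p ∈ D, p.2.2 ∈ A ∧ Set.Icc p.1 p.2.1 ⊆ Fᶜ) ∧
      volume (A \ F) ≤ (D.map (fun p => ENNReal.ofReal (p.2.1 - p.1))).sum + ε := by
  classical
  set t : Set (ℝ × ℝ × ℝ) := {p | p.1 < p.2.1 ∧ p.2.2 ∈ A \ F ∧
    p.2.2 ∈ Set.Icc p.1 p.2.1 ∧ Set.Icc p.1 p.2.1 ⊆ Set.Ioo a b ∩ Fᶜ ∧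
    p.2.2 - δ p.2.2 < p.1 ∧ p.2.1 < p.2.2 + δ p.2.2} with htdef
  have hB : ∀ p ∈ t, Set.Icc p.1 p.2.1 ⊆ Metric.closedBall p.2.2 (p.2.1 - p.1) := by
    rintro p ⟨h1, _, ⟨h3, h4⟩, _, _, _⟩
    rw [Real.closedBall_eq_Icc]
    exact Set.Icc_subset_Icc (by linarith) (by linarith)
  have hμB : ∀ p ∈ t, volume (Metric.closedBall p.2.2 (3 * (p.2.1 - p.1))) ≤
      ((6 : NNReal) : ℝ≥0∞) * volume (Set.Icc p.1 p.2.1) := by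
    rintro p ⟨h1, _⟩
    rw [Real.volume_closedBall, Real.volume_Icc]
    have h6 : ((6 : NNReal) : ℝ≥0∞) = ENNReal.ofReal (6 : ℝ) := by
      simp
    rw [h6, ← ENNReal.ofReal_mul (by norm_num)]
    apply ENNReal.ofReal_le_ofReal
    linarith
  have hint : ∀ p ∈ t, (interior (Set.Icc p.1 p.2.1)).Nonempty := by
    rintro p ⟨h1, _⟩
    rw [interior_Icc]
    exact Set.nonempty_Ioo.2 h1
  have hclosed : ∀ p ∈ t, IsClosed (Set.Icc p.1 p.2.1) := fun p _ => isClosed_Icc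
  have hfine : ∀ x ∈ A \ F, ∀ e > (0:ℝ), ∃ p ∈ t, (p.2.1 - p.1) ≤ e ∧ p.2.2 = x := by
    rintro x ⟨hxA, hxF⟩ e he
    obtain ⟨hax, hxb⟩ := hA hxA
    obtain ⟨rF, hrF, hballF⟩ := Metric.isOpen_iff.1 hF.isOpen_compl x hxF
    set h : ℝ := min e (min (δ x) (min rF (b - x))) / 2 with hhdef
    have hh : 0 < h := by
      apply div_pos _ two_pos
      exact lt_min he (lt_min (hδ x) (lt_min hrF (by linarith)))
    have hhe : h ≤ e / 2 := by
      rw [hhdef]; gcongr; exact min_le_left _ _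
    have hhδ : h ≤ δ x / 2 := by
      rw [hhdef]; gcongr; exact (min_le_right _ _).trans (min_le_left _ _)
    have hhrF : h ≤ rF / 2 := by
      rw [hhdef]; gcongr
      exact (min_le_right _ _).trans ((min_le_right _ _).trans (min_le_left _ _))
    have hhb : h ≤ (b - x) / 2 := by
      rw [hhdef]; gcongr
      exact (min_le_right _ _).trans ((min_le_right _ _).trans (min_le_right _ _))
    refine ⟨(x, x + h, x), ?_, ?_, rfl⟩
    · show x < x + h ∧ x ∈ A \ F ∧ x ∈ Set.Icc x (x + h) ∧
        Set.Icc x (x + h) ⊆ Set.Ioo a b ∩ Fᶜ ∧ x - δ x < x ∧ x + h < x + δ x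
      refine ⟨by linarith, ⟨hxA, hxF⟩, ⟨le_rfl, by linarith⟩, ?_,
        by linarith [hδ x], by linarith [hδ x]⟩
      intro y hy
      obtain ⟨hy1, hy2⟩ := hy
      refine ⟨⟨by linarith, by linarith⟩, hballF ?_⟩
      rw [Metric.mem_ball, Real.dist_eq, abs_lt]
      constructor <;> linarith
    · show x + h - x ≤ e
      linarith
  obtain ⟨u, hut, hucount, hudisj, hucov⟩ := Vitali.exists_disjoint_covering_ae
    (volume : Measure ℝ) (A \ F) t 6 (fun p => p.2.1 - p.1) (fun p => p.2.2)
    (fun p => Set.Icc p.1 p.2.1) hB hμB hint hclosed hfine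
  have hAF_fin : volume (A \ F) < ∞ := by
    refine lt_of_le_of_lt (measure_mono (fun x hx => hA hx.1)) ?_
    rw [Real.volume_Ioo]
    exact ENNReal.ofReal_lt_top
  have hcover : volume (A \ F) ≤
      ∑' (p : u), volume (Set.Icc (Subtype.val p).1 (Subtype.val p).2.1) := by
    have hsub : A \ F ⊆ ((A \ F) \ ⋃ p ∈ u, Set.Icc p.1 p.2.1) ∪ ⋃ p ∈ u, Set.Icc p.1 p.2.1 := by
      intro x hx
      by_cases hx2 : x ∈ ⋃ p ∈ u, Set.Icc p.1 p.2.1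
      · exact Or.inr hx2
      · exact Or.inl ⟨hx, hx2⟩
    calc volume (A \ F)
        ≤ volume (((A \ F) \ ⋃ p ∈ u, Set.Icc p.1 p.2.1) ∪ ⋃ p ∈ u, Set.Icc p.1 p.2.1) :=
          measure_mono hsub
      _ ≤ volume ((A \ F) \ ⋃ p ∈ u, Set.Icc p.1 p.2.1) + volume (⋃ p ∈ u, Set.Icc p.1 p.2.1) :=
          measure_union_le _ _
      _ = volume (⋃ p ∈ u, Set.Icc p.1 p.2.1) := by rw [hucov, zero_add]
      _ = ∑' (p : u), volume (Set.Icc (Subtype.val p).1 (Subtype.val p).2.1) :=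
          measure_biUnion hucount hudisj (fun p _ => measurableSet_Icc)
  rcases le_or_gt (volume (A \ F)) ε with hle | hlt
  · refine ⟨[], ⟨by simp, List.Pairwise.nil⟩, fun p hp => absurd hp List.not_mem_nil,
      fun p hp => absurd hp List.not_mem_nil, by simpa using hle⟩
  have hvne : volume (A \ F) ≠ 0 := (hε.trans hlt).ne'
  have hsublt : volume (A \ F) - ε <
      ∑' (p : u), volume (Set.Icc (Subtype.val p).1 (Subtype.val p).2.1) :=
    lt_of_lt_of_le (ENNReal.sub_lt_self hAF_fin.ne hvne hε.ne') hcover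
  rw [ENNReal.tsum_eq_iSup_sum, lt_iSup_iff] at hsublt
  obtain ⟨s, hs⟩ := hsublt
  set D : List (ℝ × ℝ × ℝ) := s.toList.map Subtype.val with hDdef
  have hmemD : ∀ q ∈ D, q ∈ t := by
    intro q hq
    rw [hDdef, List.mem_map] at hq
    obtain ⟨p, _, rfl⟩ := hq
    exact hut p.2
  have hmemDu : ∀ q ∈ D, q ∈ u := by
    intro q hq
    rw [hDdef, List.mem_map] at hq
    obtain ⟨p, _, rfl⟩ := hq
    exact p.2
  have hnodup : D.Nodup := by
    rw [hDdef]
    exact (Finset.nodup_toList s).map Subtype.val_injective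
  refine ⟨D, ⟨?_, ?_⟩, ?_, ?_, ?_⟩
  · intro q hq
    obtain ⟨h1, _, ⟨h3, h4⟩, h5, _, _⟩ := hmemD q hq
    have hu : q.1 ∈ Set.Ioo a b ∩ Fᶜ := h5 ⟨le_rfl, h1.le⟩
    have hv : q.2.1 ∈ Set.Ioo a b ∩ Fᶜ := h5 ⟨h1.le, le_rfl⟩
    exact ⟨hu.1.1.le, h1, hv.1.2.le, h3, h4⟩
  · refine hnodup.pairwise_of_forall_ne ?_
    intro q1 hq1 q2 hq2 hne
    have hdisj := hudisj (hmemDu q1 hq1) (hmemDu q2 hq2) hne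
    obtain ⟨hlt1, _⟩ := hmemD q1 hq1
    obtain ⟨hlt2, _⟩ := hmemD q2 hq2
    by_contra hcon
    push_neg at hcon
    obtain ⟨hc1, hc2⟩ := hcon
    have hx1 : max q1.1 q2.1 ∈ Set.Icc q1.1 q1.2.1 :=
      ⟨le_max_left _ _, max_le hlt1.le hc1.le⟩
    have hx2 : max q1.1 q2.1 ∈ Set.Icc q2.1 q2.2.1 :=
      ⟨le_max_right _ _, max_le hc2.le hlt2.le⟩
    exact Set.disjoint_left.1 hdisj hx1 hx2
  · intro q hq
    obtain ⟨_, _, _, _, h6, h7⟩ := hmemD q hq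
    exact ⟨h6, h7⟩
  · intro q hq
    obtain ⟨_, h2, _, h5, _, _⟩ := hmemD q hq
    exact ⟨h2.1, fun x hx => (h5 hx).2⟩
  · have hsum : (D.map (fun p => ENNReal.ofReal (p.2.1 - p.1))).sum =
        ∑ p ∈ s, volume (Set.Icc (Subtype.val p).1 (Subtype.val p).2.1) := by
      rw [hDdef, List.map_map, ← Finset.sum_map_toList]
      congr 1
      apply List.map_congr_left
      intro p _
      simp only [Function.comp_apply]
      exact Real.volume_Icc.symm
    rw [hsum]
    calc volume (A \ F) ≤ (volume (A \ F) - ε) + ε := le_tsub_add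
      _ ≤ (∑ p ∈ s, volume (Set.Icc (Subtype.val p).1 (Subtype.val p).2.1)) + ε :=
          add_le_add hs.le le_rfl

end FatouAux5
section FatouAux6

open Set MeasureTheory Filter

/-- Union of the closed intervals of a tagged list. -/
def ccU (D : List (ℝ × ℝ × ℝ)) : Set ℝ :=
  D.foldr (fun p s => Set.Icc p.1 p.2.1 ∪ s) ∅

lemma ccU_closed (D : List (ℝ × ℝ × ℝ)) : IsClosed (ccU D) := by
  induction D with
  | nil => exact isClosed_empty
  | cons p T ih => exact (isClosed_Icc).union ih

lemma mem_ccU {D : List (ℝ × ℝ × ℝ)} {x : ℝ} :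
    x ∈ ccU D ↔ ∃ p ∈ D, x ∈ Set.Icc p.1 p.2.1 := by
  induction D with
  | nil => simp [ccU]
  | cons p T ih =>
    simp only [ccU, List.foldr_cons, Set.mem_union, List.mem_cons]
    rw [show (List.foldr (fun p s => Set.Icc p.1 p.2.1 ∪ s) ∅ T) = ccU T from rfl, ih]
    constructor
    · rintro (h | ⟨q, hq, hx⟩)
      · exact ⟨p, Or.inl rfl, h⟩
      · exact ⟨q, Or.inr hq, hx⟩
    · rintro ⟨q, (rfl | hq), hx⟩
      · exact Or.inl hx
      · exact Or.inr ⟨q, hq, hx⟩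

lemma volume_ccU_le (D : List (ℝ × ℝ × ℝ)) :
    volume (ccU D) ≤ (D.map (fun p => ENNReal.ofReal (p.2.1 - p.1))).sum := by
  induction D with
  | nil => simp [ccU]
  | cons p T ih =>
    simp only [ccU, List.foldr_cons, List.map_cons, List.sum_cons]
    refine (measure_union_le _ _).trans ?_
    rw [Real.volume_Icc]
    exact add_le_add le_rfl ih

lemma nonoverlap_of_disjoint {u1 v1 u2 v2 : ℝ} (h1 : u1 < v1) (h2 : u2 < v2)
    (h : Disjoint (Set.Icc u1 v1) (Set.Icc u2 v2)) : v1 ≤ u2 ∨ v2 ≤ u1 := by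
  by_contra hcon
  push_neg at hcon
  obtain ⟨hc1, hc2⟩ := hcon
  exact Set.disjoint_left.1 h
    ⟨le_max_left _ _, max_le h1.le hc1.le⟩
    ⟨le_max_right _ _, max_le hc2.le h2.le⟩

lemma levels_le_ppSum (a b : ℝ) (δ : ℝ → ℝ) (hδ : ∀ x, 0 < δ x) :
    ∀ (K : ℕ) (A : ℕ → Set ℝ), (∀ k, A k ⊆ Set.Ioo a b) → (∀ k, A (k + 1) ⊆ A k) →
    ∀ ε : ℝ≥0∞, 0 < ε →
    ∃ L : List ((ℝ × ℝ × ℝ) × ℕ),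
      IsPP a b (L.map Prod.fst) ∧ IsFine δ (L.map Prod.fst) ∧
      (∀ q ∈ L, q.1.2.2 ∈ A q.2) ∧
      (∑ k ∈ Finset.range K, volume (A (k + 1))) ≤
        (L.map (fun q => (q.2 : ℝ≥0∞) * ENNReal.ofReal (q.1.2.1 - q.1.1))).sum + ε := by
  intro K
  induction K with
  | zero =>
    intro A hA hmono ε hε
    exact ⟨[], ⟨by simp, by simp⟩, by simp [IsFine], by simp, by simp⟩
  | succ K ih =>
    intro A hA hmono ε hε
    have hε2 : 0 < ε / 2 := ENNReal.div_pos hε.ne' (by simp)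
    obtain ⟨L', hPP', hFine', htag', hsum'⟩ :=
      ih (fun k => A (k + 1)) (fun k => hA _) (fun k => hmono _) (ε / 2) hε2
    set F : Set ℝ := ccU (L'.map Prod.fst) with hFdef
    obtain ⟨D'', hPP'', hFine'', hprop'', hcov''⟩ :=
      vitali_step a b (A 1) (hA 1) F (ccU_closed _) δ hδ (ε / 2) hε2
    set L : List ((ℝ × ℝ × ℝ) × ℕ) :=
      (L'.map (fun q => (q.1, q.2 + 1))) ++ (D''.map (fun p => (p, 1))) with hLdef
    have hLmap : L.map Prod.fst = (L'.map Prod.fst) ++ D'' := by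
      simp [hLdef, List.map_map, Function.comp_def]
    have hcross : ∀ p ∈ L'.map Prod.fst, ∀ q ∈ D'',
        p.2.1 ≤ q.1 ∨ q.2.1 ≤ p.1 := by
      intro p hp q hq
      have hpF : Set.Icc p.1 p.2.1 ⊆ F := by
        intro x hx
        rw [hFdef, mem_ccU]
        exact ⟨p, hp, hx⟩
      have hqFc : Set.Icc q.1 q.2.1 ⊆ Fᶜ := (hprop'' q hq).2
      have hdisj : Disjoint (Set.Icc p.1 p.2.1) (Set.Icc q.1 q.2.1) := by
        refine Set.disjoint_left.2 fun x hx hx' => ?_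
        exact (hqFc hx') (hpF hx)
      exact nonoverlap_of_disjoint (hPP'.1 p hp).2.1 (hPP''.1 q hq).2.1 hdisj
    refine ⟨L, ⟨?_, ?_⟩, ?_, ?_, ?_⟩
    · rw [hLmap]
      intro p hp
      rcases List.mem_append.1 hp with h | h
      · exact hPP'.1 p h
      · exact hPP''.1 p h
    · rw [hLmap, List.pairwise_append]
      exact ⟨hPP'.2, hPP''.2, hcross⟩
    · rw [hLmap]
      intro p hp
      rcases List.mem_append.1 hp with h | h
      · exact hFine' p h
      · exact hFine'' p h
    · intro q hq
      rw [hLdef] at hq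
      rcases List.mem_append.1 hq with h | h
      · rw [List.mem_map] at h
        obtain ⟨q', hq', rfl⟩ := h
        exact htag' q' hq'
      · rw [List.mem_map] at h
        obtain ⟨p, hp, rfl⟩ := h
        exact (hprop'' p hp).1
    · -- the sum estimate
      have hsplit := Finset.sum_range_succ' (fun k => volume (A (k + 1))) K
      rw [hsplit]
      have hvolF : volume F ≤ (L'.map (fun q => ENNReal.ofReal (q.1.2.1 - q.1.1))).sum := by
        refine (volume_ccU_le _).trans ?_
        rw [List.map_map]
        exact le_of_eq rfl
      have hA1 : volume (A 1) ≤
          (D''.map (fun p => ENNReal.ofReal (p.2.1 - p.1))).sum + ε / 2 +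
          (L'.map (fun q => ENNReal.ofReal (q.1.2.1 - q.1.1))).sum := by
        calc volume (A 1) ≤ volume (A 1 \ F) + volume F := by
              refine (measure_mono (?_ : A 1 ⊆ (A 1 \ F) ∪ F)).trans (measure_union_le _ _)
              intro x hx
              by_cases hxF : x ∈ F
              · exact Or.inr hxF
              · exact Or.inl ⟨hx, hxF⟩
          _ ≤ ((D''.map (fun p => ENNReal.ofReal (p.2.1 - p.1))).sum + ε / 2) +
              (L'.map (fun q => ENNReal.ofReal (q.1.2.1 - q.1.1))).sum :=
              add_le_add hcov'' hvolF
      have hLsum : (L.map (fun q => (q.2 : ℝ≥0∞) * ENNReal.ofReal (q.1.2.1 - q.1.1))).sum =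
          ((L'.map (fun q => (q.2 : ℝ≥0∞) * ENNReal.ofReal (q.1.2.1 - q.1.1))).sum +
            (L'.map (fun q => ENNReal.ofReal (q.1.2.1 - q.1.1))).sum) +
          (D''.map (fun p => ENNReal.ofReal (p.2.1 - p.1))).sum := by
        rw [hLdef, List.map_append, List.sum_append, List.map_map, List.map_map]
        congr 1
        · rw [← List.sum_map_add]
          congr 1
          apply List.map_congr_left
          intro q _
          simp only [Function.comp_apply]
          push_cast
          ring
        · apply congrArg
          apply List.map_congr_left
          intro p _
          simp only [Function.comp_apply]
          rw [Nat.cast_one, one_mul]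
      rw [hLsum]
      calc (∑ k ∈ Finset.range K, volume (A (k + 1 + 1))) + volume (A 1)
          ≤ ((L'.map (fun q => (q.2 : ℝ≥0∞) * ENNReal.ofReal (q.1.2.1 - q.1.1))).sum + ε / 2) +
            (((D''.map (fun p => ENNReal.ofReal (p.2.1 - p.1))).sum + ε / 2) +
              (L'.map (fun q => ENNReal.ofReal (q.1.2.1 - q.1.1))).sum) :=
            add_le_add hsum' hA1
        _ = (((L'.map (fun q => (q.2 : ℝ≥0∞) * ENNReal.ofReal (q.1.2.1 - q.1.1))).sum +
              (L'.map (fun q => ENNReal.ofReal (q.1.2.1 - q.1.1))).sum) +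
            (D''.map (fun p => ENNReal.ofReal (p.2.1 - p.1))).sum) + (ε / 2 + ε / 2) := by ring
        _ = _ := by rw [ENNReal.add_halves]

end FatouAux6
section FatouAux7

open Set MeasureTheory Filter

lemma list_mul_sum {α : Type*} (l : List α) (f : α → ℝ≥0∞) (aa : ℝ≥0∞) :
    aa * (l.map f).sum = (l.map (fun x => aa * f x)).sum := by
  induction l with
  | nil => simp
  | cons x tl ih => simp [mul_add, ih]

lemma exists_envelope (a b : ℝ) (c : ℝ → ℝ) (hc : ∀ t, 0 ≤ c t) (Δ : ℝ) (hΔ : 0 < Δ)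
    (ε : ℝ≥0∞) (hε : 0 < ε) :
    ∃ G : ℝ → ℝ≥0∞, Measurable G ∧ (∀ t ∈ Set.Ioo a b, ENNReal.ofReal (c t) ≤ G t) ∧
      (∫⁻ x in Set.Icc a b, G x) ≤ varM a b (fun u v t => c t * (v - u)) (Set.Icc a b) +
        ENNReal.ofReal (Δ * (b - a)) + ε := by
  classical
  set μvar := varM a b (fun u v t => c t * (v - u)) (Set.Icc a b) with hμvardef
  set A : ℕ → Set ℝ := fun k => {t | t ∈ Set.Ioo a b ∧ (k : ℝ) * Δ ≤ c t} with hAdef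
  have hAsub : ∀ k, A k ⊆ Set.Ioo a b := fun k t ht => ht.1
  have hAmono : ∀ k, A (k + 1) ⊆ A k := by
    intro k t ht
    refine ⟨ht.1, le_trans ?_ ht.2⟩
    have h1 : (k : ℝ) ≤ (k : ℝ) + 1 := by linarith
    push_cast
    nlinarith [hΔ.le]
  have hΔ0 : ENNReal.ofReal Δ ≠ 0 := by
    simp [ENNReal.ofReal_pos.2 hΔ, (ENNReal.ofReal_pos.2 hΔ).ne']
  -- the key sum bound
  have hkey : (∑' k : ℕ, ENNReal.ofReal Δ * volume (A (k + 1))) ≤ μvar + ε := by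
    rw [ENNReal.tsum_eq_iSup_nat]
    refine iSup_le fun K => ?_
    rcases eq_or_ne μvar ⊤ with htop | htop
    · rw [htop]; simp [top_add]
    have hμlt : μvar < μvar + ε / 2 := ENNReal.lt_add_right htop (ENNReal.div_pos hε.ne' (by simp)).ne'
    rw [hμvardef, varM, iInf_lt_iff] at hμlt
    obtain ⟨⟨δ, hδ⟩, hSδ⟩ := hμlt
    have hε' : (0:ℝ≥0∞) < ε / 2 / ENNReal.ofReal Δ := by
      apply ENNReal.div_pos _ ENNReal.ofReal_ne_top
      exact (ENNReal.div_pos hε.ne' (by simp)).ne'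
    obtain ⟨L, hPP, hFine, htag, hsum⟩ := levels_le_ppSum a b δ hδ K A hAsub hAmono _ hε'
    have hD : ENNReal.ofReal (ppSum (Set.Icc a b) (fun u v t => c t * (v - u)) (L.map Prod.fst)) ≤
        ⨆ D : {D : List (ℝ × ℝ × ℝ) // IsPP a b D ∧ IsFine δ D},
          ENNReal.ofReal (ppSum (Set.Icc a b) (fun u v t => c t * (v - u)) D.1) :=
      le_iSup_of_le ⟨L.map Prod.fst, hPP, hFine⟩ le_rfl
    have hmain : ENNReal.ofReal Δ *
        (L.map (fun q => (q.2 : ℝ≥0∞) * ENNReal.ofReal (q.1.2.1 - q.1.1))).sum ≤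
        ENNReal.ofReal (ppSum (Set.Icc a b) (fun u v t => c t * (v - u)) (L.map Prod.fst)) := by
      rw [list_mul_sum]
      rw [ppSum, ofReal_list_sum_eq, List.map_map, List.map_map]
      swap
      · intro x hx
        rw [List.mem_map] at hx
        obtain ⟨p, hp, rfl⟩ := hx
        apply Set.indicator_nonneg
        intro _ _
        have h1 := (hPP.1 p hp).2.1
        have h2 := hc p.2.2
        nlinarith
      apply List.sum_le_sum
      intro q hq
      simp only [Function.comp_apply]
      have htagq := htag q hq
      have htIoo : q.1.2.2 ∈ Set.Ioo a b := (hAsub _ htagq)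
      have htIcc : q.1.2.2 ∈ Set.Icc a b := ⟨htIoo.1.le, htIoo.2.le⟩
      rw [Set.indicator_of_mem htIcc]
      calc ENNReal.ofReal Δ * ((q.2 : ℝ≥0∞) * ENNReal.ofReal (q.1.2.1 - q.1.1))
          = ENNReal.ofReal ((q.2 : ℝ) * Δ) * ENNReal.ofReal (q.1.2.1 - q.1.1) := by
            rw [← ENNReal.ofReal_natCast q.2, ← mul_assoc,
              mul_comm (ENNReal.ofReal Δ), ENNReal.ofReal_mul (by positivity)]
        _ ≤ ENNReal.ofReal (c q.1.2.2) * ENNReal.ofReal (q.1.2.1 - q.1.1) := by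
            apply mul_le_mul_left
            exact ENNReal.ofReal_le_ofReal htagq.2
        _ = ENNReal.ofReal (c q.1.2.2 * (q.1.2.1 - q.1.1)) := (ENNReal.ofReal_mul (hc _)).symm
    calc (∑ k ∈ Finset.range K, ENNReal.ofReal Δ * volume (A (k + 1)))
        = ENNReal.ofReal Δ * ∑ k ∈ Finset.range K, volume (A (k + 1)) := by
          rw [Finset.mul_sum]
      _ ≤ ENNReal.ofReal Δ *
          ((L.map (fun q => (q.2 : ℝ≥0∞) * ENNReal.ofReal (q.1.2.1 - q.1.1))).sum +
            ε / 2 / ENNReal.ofReal Δ) := mul_le_mul_right hsum _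
      _ = ENNReal.ofReal Δ *
          (L.map (fun q => (q.2 : ℝ≥0∞) * ENNReal.ofReal (q.1.2.1 - q.1.1))).sum +
          ENNReal.ofReal Δ * (ε / 2 / ENNReal.ofReal Δ) := mul_add _ _ _
      _ ≤ (μvar + ε / 2) + ε / 2 := by
          apply add_le_add
          · exact ((hmain.trans hD).trans (le_of_lt hSδ))
          · rw [ENNReal.mul_div_cancel hΔ0 ENNReal.ofReal_ne_top]
      _ = μvar + ε := by rw [add_assoc, ENNReal.add_halves]
  -- measurable hulls
  have hhull : ∀ k : ℕ, ∃ H, H ⊇ A (k + 1) ∧ MeasurableSet H ∧ volume H = volume (A (k + 1)) :=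
    fun k => exists_measurable_superset _ _
  choose H hHsup hHmeas hHvol using hhull
  set G : ℝ → ℝ≥0∞ := fun t =>
    ENNReal.ofReal Δ + ∑' k : ℕ, (H k).indicator (fun _ => ENNReal.ofReal Δ) t with hGdef
  have hGmeas : Measurable G := by
    refine Measurable.add (f := fun _ => ENNReal.ofReal Δ)
      (g := fun t => ∑' k : ℕ, (H k).indicator (fun _ => ENNReal.ofReal Δ) t) measurable_const ?_
    exact Measurable.ennreal_tsum (fun k => measurable_const.indicator (hHmeas k))
  refine ⟨G, hGmeas, ?_, ?_⟩
  · -- majorant on Ioo a b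
    intro t ht
    set m : ℕ := ⌊c t / Δ⌋₊ with hmdef
    have hct : c t < ((m : ℝ) + 1) * Δ := by
      have h1 : c t / Δ < (m : ℝ) + 1 := by
        have := Nat.lt_floor_add_one (c t / Δ)
        push_cast at this ⊢
        linarith
      calc c t = (c t / Δ) * Δ := by field_simp
        _ < ((m : ℝ) + 1) * Δ := by
          apply mul_lt_mul_of_pos_right h1 hΔ
    have hmem : ∀ k < m, t ∈ H k := by
      intro k hk
      apply hHsup
      refine ⟨ht, ?_⟩
      have h1 : ((k : ℕ) + 1 : ℕ) ≤ m := hk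
      have h2 : ((k + 1 : ℕ) : ℝ) ≤ c t / Δ :=
        (Nat.le_floor_iff (div_nonneg (hc t) hΔ.le)).1 h1
      exact (le_div_iff₀ hΔ).1 h2
    have hbound : ((m : ℝ≥0∞)) * ENNReal.ofReal Δ ≤
        ∑' k : ℕ, (H k).indicator (fun _ => ENNReal.ofReal Δ) t := by
      have : ∀ k ∈ Finset.range m, (H k).indicator (fun _ => ENNReal.ofReal Δ) t =
          ENNReal.ofReal Δ := by
        intro k hk
        rw [Set.indicator_of_mem (hmem k (Finset.mem_range.1 hk))]
      calc ((m : ℝ≥0∞)) * ENNReal.ofReal Δ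
          = ∑ k ∈ Finset.range m, (H k).indicator (fun _ => ENNReal.ofReal Δ) t := by
            rw [Finset.sum_congr rfl this, Finset.sum_const, Finset.card_range, nsmul_eq_mul]
        _ ≤ _ := ENNReal.sum_le_tsum _
    calc ENNReal.ofReal (c t) ≤ ENNReal.ofReal (((m : ℝ) + 1) * Δ) :=
          ENNReal.ofReal_le_ofReal hct.le
      _ = ((m : ℝ≥0∞) + 1) * ENNReal.ofReal Δ := by
          rw [ENNReal.ofReal_mul (by positivity)]
          congr 1
          rw [ENNReal.ofReal_add (by positivity) zero_le_one]
          simp [ENNReal.ofReal_natCast]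
      _ = ENNReal.ofReal Δ + (m : ℝ≥0∞) * ENNReal.ofReal Δ := by ring
      _ ≤ G t := by
          rw [hGdef]
          exact add_le_add le_rfl hbound
  · -- integral bound
    have hint : (∫⁻ x in Set.Icc a b, G x) =
        ENNReal.ofReal Δ * volume (Set.Icc a b) +
        ∑' k : ℕ, ENNReal.ofReal Δ * volume (H k ∩ Set.Icc a b) := by
      rw [hGdef]
      rw [lintegral_add_left measurable_const]
      congr 1
      · exact setLIntegral_const _ _
      · rw [lintegral_tsum (fun k => (measurable_const.indicator (hHmeas k)).aemeasurable)]
        congr 1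
        funext k
        rw [lintegral_indicator (hHmeas k), setLIntegral_const,
          Measure.restrict_apply (hHmeas k)]
    rw [hint]
    have h1 : ENNReal.ofReal Δ * volume (Set.Icc a b) ≤ ENNReal.ofReal (Δ * (b - a)) := by
      rw [Real.volume_Icc, ← ENNReal.ofReal_mul hΔ.le]
    have h2 : (∑' k : ℕ, ENNReal.ofReal Δ * volume (H k ∩ Set.Icc a b)) ≤ μvar + ε := by
      refine le_trans (ENNReal.tsum_le_tsum (fun k => ?_)) hkey
      apply mul_le_mul_right
      rw [← hHvol k]
      exact measure_mono Set.inter_subset_left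
    calc ENNReal.ofReal Δ * volume (Set.Icc a b) +
        ∑' k : ℕ, ENNReal.ofReal Δ * volume (H k ∩ Set.Icc a b)
        ≤ ENNReal.ofReal (Δ * (b - a)) + (μvar + ε) := add_le_add h1 h2
      _ = μvar + ENNReal.ofReal (Δ * (b - a)) + ε := by ring

end FatouAux7
section FatouMain

open Set MeasureTheory Filter

/-- Fatou's lemma for upper integrals. -/
theorem stmt15 {X : Type*} [AddCommGroup X] [Module ℝ X] (ρ : Seminorm ℝ X)
    (a b : ℝ) (p : ℝ) (hp : 1 ≤ p) (f : ℕ → ℝ → X) (g : ℝ → X)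
    (hconv : ∃ E : Set ℝ, MeasureTheory.volume E = 0 ∧
      ∀ x ∈ Set.Icc a b \ E,
        Filter.Tendsto (fun n => ρ (f n x - g x)) Filter.atTop (nhds 0)) :
    UNorm a b ρ p g (Set.Icc a b) ≤
      Filter.atTop.liminf (fun n => UNorm a b ρ p (f n) (Set.Icc a b)) := by
  classical
  obtain ⟨N, hN, hNconv⟩ := hconv
  set c : ℝ → ℝ := fun t => ρ (g t) ^ p with hcdef
  set cn : ℕ → ℝ → ℝ := fun n t => ρ (f n t) ^ p with hcndef
  have hc : ∀ t, 0 ≤ c t := fun t => Real.rpow_nonneg (apply_nonneg ρ _) p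
  have hcn : ∀ n t, 0 ≤ cn n t := fun n t => Real.rpow_nonneg (apply_nonneg ρ _) p
  set W : (ℝ → ℝ) → ℝ≥0∞ :=
    fun cc => varM a b (fun u v t => cc t * (v - u)) (Set.Icc a b) with hWdef
  -- pointwise convergence of the weights
  have htend : ∀ t ∈ Set.Icc a b \ N,
      Tendsto (fun n => ENNReal.ofReal (cn n t)) atTop (nhds (ENNReal.ofReal (c t))) := by
    intro t ht
    have h0 := hNconv t ht
    have h1 : Tendsto (fun n => ρ (f n t)) atTop (nhds (ρ (g t))) := by
      rw [tendsto_iff_dist_tendsto_zero]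
      refine squeeze_zero (fun n => dist_nonneg) (fun n => ?_) h0
      rw [Real.dist_eq, abs_le]
      have ha1 : ρ (f n t) ≤ ρ (f n t - g t) + ρ (g t) := by
        calc ρ (f n t) = ρ ((f n t - g t) + g t) := by rw [sub_add_cancel]
          _ ≤ ρ (f n t - g t) + ρ (g t) := map_add_le_add ρ _ _
      have ha2 : ρ (g t) ≤ ρ (f n t - g t) + ρ (f n t) := by
        calc ρ (g t) = ρ ((g t - f n t) + f n t) := by rw [sub_add_cancel]
          _ ≤ ρ (g t - f n t) + ρ (f n t) := map_add_le_add ρ _ _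
          _ = ρ (f n t - g t) + ρ (f n t) := by
              rw [show g t - f n t = -(f n t - g t) from (neg_sub _ _).symm, map_neg_eq_map]
      constructor <;> linarith
    have h2 : Tendsto (fun n => cn n t) atTop (nhds (c t)) :=
      ((Real.continuousAt_rpow_const _ p (Or.inr (by linarith))).tendsto.comp h1)
    exact (ENNReal.continuous_ofReal.tendsto _).comp h2
  have hwpos : ∀ (u' v' t' : ℝ), u' < v' → 0 ≤ c t' * (v' - u') :=
    fun u' v' t' h => mul_nonneg (hc _) (by linarith)
  -- the main inequality at the level of variational measures
  have hmain : W c ≤ atTop.liminf (fun n => W (cn n)) := by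
    refine ENNReal.le_of_forall_pos_le_add fun κ hκ hLfin => ?_
    have hκR : (0:ℝ) < (κ:ℝ) := by exact_mod_cast hκ
    set M : ℝ := max (b - a) 0 + 1 with hM
    have hMpos : 0 < M := by positivity
    set Δ : ℝ := ((κ:ℝ)/2) / M with hΔdef
    have hΔpos : 0 < Δ := div_pos (half_pos hκR) hMpos
    have hΔbound : ENNReal.ofReal (Δ * (b - a)) ≤ ENNReal.ofReal ((κ:ℝ)/2) := by
      apply ENNReal.ofReal_le_ofReal
      calc Δ * (b - a) ≤ Δ * M := by
            apply mul_le_mul_of_nonneg_left _ hΔpos.le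
            rw [hM]
            have := le_max_left (b - a) 0
            linarith
        _ = (κ:ℝ)/2 := by rw [hΔdef, div_mul_cancel₀ _ hMpos.ne']
    set εE : ℝ≥0∞ := ENNReal.ofReal ((κ:ℝ)/2) with hεEdef
    have hεEpos : 0 < εE := ENNReal.ofReal_pos.2 (by positivity)
    have henv := fun n => exists_envelope a b (cn n) (hcn n) Δ hΔpos εE hεEpos
    choose Gn hGnmeas hGnmaj hGnint using henv
    set G : ℝ → ℝ≥0∞ := fun t => atTop.liminf (fun n => Gn n t) with hGdef
    have hGmeas : Measurable G := Measurable.liminf hGnmeas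
    set S : Set ℝ := N ∪ {a, b} with hS
    have hSnull : volume S = 0 := by
      apply measure_union_null hN
      exact Set.Countable.measure_zero ((Set.countable_singleton b).insert a) _
    have hsplit : W c ≤ varM a b (fun u v t => c t * (v - u)) (Set.Icc a b \ S) +
        varM a b (fun u v t => c t * (v - u)) (Set.Icc a b ∩ S) := by
      have hEeq : Set.Icc a b = (Set.Icc a b \ S) ∪ (Set.Icc a b ∩ S) := by
        rw [Set.diff_union_inter]
      rw [hWdef]
      conv_lhs => rw [hEeq]
      exact varM_union_le a b _ hwpos _ _
    have hz0 : varM a b (fun u v t => c t * (v - u)) (Set.Icc a b ∩ S) = 0 := by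
      refine le_antisymm ?_ zero_le
      refine le_trans (varM_mono_set a b _ hwpos Set.inter_subset_right) ?_
      exact (varM_null a b c hc hSnull).le
    have hmaj : ∀ t ∈ (Set.Icc a b \ S) ∩ Set.Icc a b, ENNReal.ofReal (c t) ≤ G t := by
      rintro t ⟨⟨htIcc, htS⟩, -⟩
      have htIoo : t ∈ Set.Ioo a b := by
        rcases lt_or_eq_of_le htIcc.1 with h | h
        · rcases lt_or_eq_of_le htIcc.2 with h' | h'
          · exact ⟨h, h'⟩
          · exact absurd (by rw [hS]; right; simp [h'] : t ∈ S) htS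
        · exact absurd (by rw [hS]; right; simp [← h] : t ∈ S) htS
      have htN : t ∈ Set.Icc a b \ N := ⟨htIcc, fun h => htS (by rw [hS]; exact Or.inl h)⟩
      have heq : ENNReal.ofReal (c t) = atTop.liminf (fun n => ENNReal.ofReal (cn n t)) :=
        ((htend t htN).liminf_eq).symm
      rw [heq, hGdef]
      exact Filter.liminf_le_liminf (Filter.Eventually.of_forall (fun n => hGnmaj n t htIoo))
    have hlin : varM a b (fun u v t => c t * (v - u)) (Set.Icc a b \ S) ≤
        ∫⁻ x in Set.Icc a b, G x :=
      varM_le_lintegral a b c hc _ G hGmeas hmaj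
    have hfatou : (∫⁻ x in Set.Icc a b, G x) ≤
        atTop.liminf (fun n => ∫⁻ x in Set.Icc a b, Gn n x) := by
      rw [hGdef]
      exact lintegral_liminf_le hGnmeas
    set k : ℝ≥0∞ := ENNReal.ofReal (Δ * (b - a)) + εE with hk
    have hbound : ∀ n, (∫⁻ x in Set.Icc a b, Gn n x) ≤ W (cn n) + k := by
      intro n
      refine (hGnint n).trans ?_
      rw [hk, hWdef, ← add_assoc]
    have hkκ : k ≤ (κ : ℝ≥0∞) := by
      rw [hk, hεEdef]
      calc ENNReal.ofReal (Δ * (b - a)) + ENNReal.ofReal ((κ:ℝ)/2)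
          ≤ ENNReal.ofReal ((κ:ℝ)/2) + ENNReal.ofReal ((κ:ℝ)/2) := add_le_add hΔbound le_rfl
        _ = ENNReal.ofReal ((κ:ℝ)/2 + (κ:ℝ)/2) := (ENNReal.ofReal_add (by positivity) (by positivity)).symm
        _ = ENNReal.ofReal (κ:ℝ) := by ring_nf
        _ = (κ : ℝ≥0∞) := ENNReal.ofReal_coe_nnreal
    have hφ : atTop.liminf (fun n => W (cn n) + k) = atTop.liminf (fun n => W (cn n)) + k := by
      have hmono : Monotone (fun x : ℝ≥0∞ => x + k) := fun x y h => add_le_add_left h k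
      have hcont : ContinuousAt (fun x : ℝ≥0∞ => x + k)
          (atTop.liminf (fun n => W (cn n))) :=
        (continuous_id.add continuous_const).continuousAt
      have h' := hmono.map_liminf_of_continuousAt (fun n => W (cn n)) hcont
      simp only [Function.comp_def] at h'
      exact h'.symm
    calc W c ≤ varM a b (fun u v t => c t * (v - u)) (Set.Icc a b \ S) := by
          rw [hz0, add_zero] at hsplit; exact hsplit
      _ ≤ ∫⁻ x in Set.Icc a b, G x := hlin
      _ ≤ atTop.liminf (fun n => ∫⁻ x in Set.Icc a b, Gn n x) := hfatou
      _ ≤ atTop.liminf (fun n => W (cn n) + k) :=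
          Filter.liminf_le_liminf (Filter.Eventually.of_forall hbound)
      _ = atTop.liminf (fun n => W (cn n)) + k := hφ
      _ ≤ atTop.liminf (fun n => W (cn n)) + κ := add_le_add le_rfl hkκ
  -- conclude via the (1/p)-power
  have hp' : 0 < 1 / p := by positivity
  have hmono : Monotone (fun x : ℝ≥0∞ => x ^ (1 / p)) :=
    fun x y h => ENNReal.rpow_le_rpow h hp'.le
  have hcomp : atTop.liminf (fun n => W (cn n)) ^ (1 / p) =
      atTop.liminf (fun n => W (cn n) ^ (1 / p)) := by
    have h' := hmono.map_liminf_of_continuousAt (F := atTop) (fun n => W (cn n))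
      ENNReal.continuous_rpow_const.continuousAt
    simp only [Function.comp_def] at h'
    exact h'
  calc UNorm a b ρ p g (Set.Icc a b) = W c ^ (1 / p) := rfl
    _ ≤ atTop.liminf (fun n => W (cn n)) ^ (1 / p) := ENNReal.rpow_le_rpow hmain hp'.le
    _ = atTop.liminf (fun n => W (cn n) ^ (1 / p)) := hcomp
    _ = atTop.liminf (fun n => UNorm a b ρ p (f n) (Set.Icc a b)) := rfl

end FatouMain
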